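/- arXiv:1812.03557 — 2 statements merged into one kernel-verified Lean document; each statement's English description precedes it below -/
import Mathlib

section
/- In an exchange economy with finitely many agents and goods, if every agent's utility is locally non-satiated, then every Walrasian equilibrium allocation is Pareto-efficient (First Welfare Theorem). -/
open Finset

theorem first_welfare_theorem
    (N M : ℕ)
    (q : Fin N → Fin M → ℝ) (hq : ∀ n m, 0 ≤ q n m)
    (u : Fin N → (Fin M → ℝ) → ℝ)
    (p : Fin M → ℝ) (hp : ∀ m, 0 < p m)
    (x : Fin N → Fin M → ℝ) (hx : ∀ n m, 0 ≤ x n m)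
    -- local non-satiation of every agent's utility
    (hlns : ∀ n (z : Fin M → ℝ), (∀ m, 0 ≤ z m) → ∀ ε : ℝ, 0 < ε →
      ∃ y : Fin M → ℝ, (∀ m, 0 ≤ y m) ∧ ‖y - z‖ ≤ ε ∧ u n z < u n y)
    -- each xₙ maximizes uₙ on the budget set
    (hbudget : ∀ n, ∑ m, p m * x n m ≤ ∑ m, p m * q n m)
    (hmax : ∀ n (y : Fin M → ℝ), (∀ m, 0 ≤ y m) →
      ∑ m, p m * y m ≤ ∑ m, p m * q n m → u n y ≤ u n (x n))
    -- market clearing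
    (hclear : ∀ m, ∑ n, x n m = ∑ n, q n m) :
    -- Pareto efficiency
    ¬ ∃ y : Fin N → Fin M → ℝ,
        (∀ n m, 0 ≤ y n m) ∧
        (∀ m, ∑ n, y n m ≤ ∑ n, q n m) ∧
        (∀ n, u n (x n) ≤ u n (y n)) ∧
        (∃ n, u n (x n) < u n (y n)) := by
  rintro ⟨y, hy0, hyfeas, hyge, n0, hn0⟩
  -- weak preference implies cost at least wealth
  have key : ∀ n (z : Fin M → ℝ), (∀ m, 0 ≤ z m) → u n (x n) ≤ u n z →
      ∑ m, p m * q n m ≤ ∑ m, p m * z m := by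
    intro n z hz0 hpref
    by_contra h
    push_neg at h
    set δ : ℝ := ∑ m, p m * q n m - ∑ m, p m * z m with hδ
    have hδpos : 0 < δ := by simp [hδ]; linarith
    set S : ℝ := ∑ m, p m with hS
    have hS0 : 0 ≤ S := Finset.sum_nonneg fun m _ => (hp m).le
    obtain ⟨w, hw0, hwnorm, hwlt⟩ := hlns n z hz0 (δ / (S + 1)) (by positivity)
    have hbound : ∑ m, p m * w m - ∑ m, p m * z m ≤ S * (δ / (S + 1)) := by
      rw [← Finset.sum_sub_distrib, hS, Finset.sum_mul]
      apply Finset.sum_le_sum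
      intro m _
      have h1 : |w m - z m| ≤ ‖w - z‖ := by
        have := norm_le_pi_norm (w - z) m
        simpa using this
      have h2 : p m * w m - p m * z m = p m * (w m - z m) := by ring
      rw [h2]
      calc p m * (w m - z m) ≤ p m * |w m - z m| :=
            mul_le_mul_of_nonneg_left (le_abs_self _) (hp m).le
        _ ≤ p m * (δ / (S + 1)) :=
            mul_le_mul_of_nonneg_left (h1.trans hwnorm) (hp m).le
    have hfrac : S * (δ / (S + 1)) ≤ δ := by
      rw [mul_div_assoc']
      rw [div_le_iff₀ (by linarith)]
      nlinarith
    have hbud : ∑ m, p m * w m ≤ ∑ m, p m * q n m := by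
      have : ∑ m, p m * w m ≤ ∑ m, p m * z m + δ := by linarith
      simp [hδ] at this ⊢; linarith
    exact absurd (hmax n w hw0 hbud) (not_le.2 (lt_of_le_of_lt hpref hwlt))
  -- strict preference implies cost strictly more than wealth
  have keystrict : ∑ m, p m * q n0 m < ∑ m, p m * y n0 m := by
    by_contra h
    push_neg at h
    exact absurd (hmax n0 (y n0) (hy0 n0) h) (not_le.2 hn0)
  have hsum : ∑ n, ∑ m, p m * q n m < ∑ n, ∑ m, p m * y n m := by
    apply Finset.sum_lt_sum (fun n _ => key n (y n) (hy0 n) (hyge n))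
    exact ⟨n0, Finset.mem_univ n0, keystrict⟩
  have hother : ∑ n, ∑ m, p m * y n m ≤ ∑ n, ∑ m, p m * q n m := by
    rw [Finset.sum_comm]
    nth_rewrite 2 [Finset.sum_comm]
    apply Finset.sum_le_sum
    intro m _
    rw [← Finset.mul_sum, ← Finset.mul_sum]
    exact mul_le_mul_of_nonneg_left (hyfeas m) (hp m).le
  linarith
end

section
/- In an exchange economy with locally non-satiated utilities, any Walrasian equilibrium allocation lies in the core: no coalition c of agents can find an allocation y_c feasible for c (Σ_{n∈c} y_n ≤ Σ_{n∈c} q_n) such that u_n(y_n) ≥ u_n(x̄_n) for all n ∈ c with strict inequality for some n ∈ c. -/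
/-!
Were some coalition to improve on the equilibrium allocation, every member's bundle would cost at
least their wealth at the equilibrium prices (otherwise, by local non-satiation, a nearby bundle
would still be affordable and strictly better than the equilibrium bundle), and the strictly
better-off member's bundle would cost strictly more. So the coalition's bundles would cost more
than its endowments, although they add up to at most those endowments and prices are positive.
-/

open Finset Topology

section Demand

variable {ι : Type*} [Fintype ι] {U : (ι → ℝ) → ℝ} {p x z : ι → ℝ} {w : ℝ}

theorem lt_dotProduct_of_utility_lt (hmax : ∀ y, 0 ≤ y → p ⬝ᵥ y ≤ w → U y ≤ U x)
    (hz : 0 ≤ z) (hxz : U x < U z) : w < p ⬝ᵥ z :=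
  lt_of_not_ge fun hcheap => (hmax z hz hcheap).not_gt hxz

theorem le_dotProduct_of_le_utility (hmax : ∀ y, 0 ≤ y → p ⬝ᵥ y ≤ w → U y ≤ U x)
    (hlns : ∀ ε > 0, ∃ y, 0 ≤ y ∧ ‖y - z‖ ≤ ε ∧ U z < U y) (hxz : U x ≤ U z) :
    w ≤ p ⬝ᵥ z := by
  by_contra! hcheap
  have hnear : ∀ᶠ y in 𝓝 z, p ⬝ᵥ y < w :=
    ((continuous_const.dotProduct continuous_id).tendsto z).eventually_lt_const hcheap
  obtain ⟨ε, hε, hball⟩ := Metric.eventually_nhds_iff.1 hnear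
  obtain ⟨y, hy, hyz, hzy⟩ := hlns (ε / 2) (half_pos hε)
  have hyx := hmax y hy (hball (by rw [dist_eq_norm]; linarith)).le
  linarith

end Demand

theorem sum_dotProduct_le_sum_dotProduct {ι κ : Type*} [Fintype ι] {s : Finset κ} {p : ι → ℝ}
    (hp : 0 ≤ p) {y q : κ → ι → ℝ} (h : ∀ m, ∑ n ∈ s, y n m ≤ ∑ n ∈ s, q n m) :
    ∑ n ∈ s, p ⬝ᵥ y n ≤ ∑ n ∈ s, p ⬝ᵥ q n := by
  rw [← dotProduct_sum, ← dotProduct_sum]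
  refine dotProduct_le_dotProduct_of_nonneg_left (fun m => ?_) hp
  simpa only [Finset.sum_apply] using h m

theorem walrasian_equilibrium_in_core_general
    (N M : ℕ)
    (q : Fin N → Fin M → ℝ)
    (u : Fin N → (Fin M → ℝ) → ℝ)
    (p : Fin M → ℝ) (hp : ∀ m, 0 < p m)
    (xbar : Fin N → Fin M → ℝ)
    (hlns : ∀ n (z : Fin M → ℝ), (∀ m, 0 ≤ z m) → ∀ ε : ℝ, 0 < ε →
      ∃ y : Fin M → ℝ, (∀ m, 0 ≤ y m) ∧ ‖y - z‖ ≤ ε ∧ u n z < u n y)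
    (hmax : ∀ n (y : Fin M → ℝ), (∀ m, 0 ≤ y m) →
      ∑ m, p m * y m ≤ ∑ m, p m * q n m → u n y ≤ u n (xbar n)) :
    ¬ ∃ (c : Finset (Fin N)) (y : Fin N → Fin M → ℝ),
        c.Nonempty ∧
        (∀ n ∈ c, ∀ m, 0 ≤ y n m) ∧
        (∀ m, ∑ n ∈ c, y n m ≤ ∑ n ∈ c, q n m) ∧
        (∀ n ∈ c, u n (xbar n) ≤ u n (y n)) ∧
        (∃ n ∈ c, u n (xbar n) < u n (y n)) := by
  rintro ⟨c, y, -, hy, hfeas, hweak, n₀, hn₀, hstrict⟩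
  have hcost : ∑ n ∈ c, p ⬝ᵥ q n < ∑ n ∈ c, p ⬝ᵥ y n :=
    sum_lt_sum
      (fun n hn => le_dotProduct_of_le_utility (hmax n) (hlns n (y n) (hy n hn)) (hweak n hn))
      ⟨n₀, hn₀, lt_dotProduct_of_utility_lt (hmax n₀) (hy n₀ hn₀) hstrict⟩
  exact (sum_dotProduct_le_sum_dotProduct (fun m => (hp m).le) hfeas).not_gt hcost

theorem walrasian_equilibrium_in_core
    (N M : ℕ)
    (q : Fin N → Fin M → ℝ) (hq : ∀ n m, 0 ≤ q n m)
    (u : Fin N → (Fin M → ℝ) → ℝ)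
    (p : Fin M → ℝ) (hp : ∀ m, 0 < p m)
    (xbar : Fin N → Fin M → ℝ) (hx : ∀ n m, 0 ≤ xbar n m)
    (hlns : ∀ n (z : Fin M → ℝ), (∀ m, 0 ≤ z m) → ∀ ε : ℝ, 0 < ε →
      ∃ y : Fin M → ℝ, (∀ m, 0 ≤ y m) ∧ ‖y - z‖ ≤ ε ∧ u n z < u n y)
    (hbudget : ∀ n, ∑ m, p m * xbar n m ≤ ∑ m, p m * q n m)
    (hmax : ∀ n (y : Fin M → ℝ), (∀ m, 0 ≤ y m) →
      ∑ m, p m * y m ≤ ∑ m, p m * q n m → u n y ≤ u n (xbar n))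
    (hclear : ∀ m, ∑ n, xbar n m = ∑ n, q n m) :
    ¬ ∃ (c : Finset (Fin N)) (y : Fin N → Fin M → ℝ),
        c.Nonempty ∧
        (∀ n ∈ c, ∀ m, 0 ≤ y n m) ∧
        (∀ m, ∑ n ∈ c, y n m ≤ ∑ n ∈ c, q n m) ∧
        (∀ n ∈ c, u n (xbar n) ≤ u n (y n)) ∧
        (∃ n ∈ c, u n (xbar n) < u n (y n)) :=
  walrasian_equilibrium_in_core_general N M q u p hp xbar hlns hmax
end
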